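/- For any word α in the generators σ_1^{±1}, …, σ_{k−1}^{±1} of B_k and any 1 ≤ i ≠ j ≤ p, there exists 0 ≤ m ≤ k−1 (namely m = perm(α)(1) − 1) such that φ_{α^{(p)}}(a_{ij}) = a_{i+mp, j+mp} in 𝒜_{kp}. -/

import Mathlib

open scoped TensorProduct

/-- Generator index set for the algebra `𝒜ₙ`: pairs `(i,j)` with `1 ≤ i,j ≤ n`, `i ≠ j`. -/
abbrev Idx (n : ℕ) : Type := {q : ℕ × ℕ // q.1 ≠ q.2 ∧ 1 ≤ q.1 ∧ q.1 ≤ n ∧ 1 ≤ q.2 ∧ q.2 ≤ n}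

/-- `𝒜ₙ`, the free noncommutative unital `ℤ`-algebra on the generators `a_{ij}`. -/
abbrev FA (n : ℕ) : Type := FreeAlgebra ℤ (Idx n)

/-- The generator `a_{ij}` when the indices are in range (`1 ≤ i,j ≤ n`, `i ≠ j`); `0` otherwise. -/
noncomputable def gen (n i j : ℕ) : FA n :=
  if h : i ≠ j ∧ 1 ≤ i ∧ i ≤ n ∧ 1 ≤ j ∧ j ≤ n then FreeAlgebra.ι ℤ (⟨(i, j), h⟩ : Idx n) else 0

/-- Image of the generator `a_{ij}` under `φ_{σ_k}`. -/
noncomputable def phiGenImg (n k i j : ℕ) : FA n :=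
  if i = k then
    (if j = k + 1 then -gen n (k+1) k
     else gen n (k+1) j - gen n (k+1) k * gen n k j)
  else if i = k + 1 then
    (if j = k then -gen n k (k+1) else gen n k j)
  else
    if j = k then gen n i (k+1) - gen n i k * gen n k (k+1)
    else if j = k + 1 then gen n i k
    else gen n i j

/-- Image of the generator `a_{ij}` under `φ_{σ_k}⁻¹ = φ_{σ_k⁻¹}`. -/
noncomputable def phiInvGenImg (n k i j : ℕ) : FA n :=
  if i = k + 1 then
    (if j = k then -gen n k (k+1)
     else gen n k j - gen n k (k+1) * gen n (k+1) j)
  else if i = k then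
    (if j = k + 1 then -gen n (k+1) k else gen n (k+1) j)
  else
    if j = k + 1 then gen n i k - gen n i (k+1) * gen n (k+1) k
    else if j = k then gen n i (k+1)
    else gen n i j

/-- `φ_{σ_k}` for the letter `(k, true)` and `φ_{σ_k⁻¹}` for the letter `(k, false)`. -/
noncomputable def phiLetter (n : ℕ) (l : ℕ × Bool) : FA n →ₐ[ℤ] FA n :=
  FreeAlgebra.lift ℤ fun g : Idx n =>
    if l.2 then phiGenImg n l.1 g.val.1 g.val.2 else phiInvGenImg n l.1 g.val.1 g.val.2

/-- `φ_β` for a word `β` in the letters `σ_k^{±1}`, with `φ_{β₁β₂} = φ_{β₁} ∘ φ_{β₂}`. -/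
noncomputable def phiWord (n : ℕ) (w : List (ℕ × Bool)) : FA n →ₐ[ℤ] FA n :=
  w.foldr (fun l f => (phiLetter n l).comp f) (AlgHom.id ℤ (FA n))

/-- `β` is a word in the generators `σ_1^{±1}, …, σ_{n−1}^{±1}` of the braid group `B_n`. -/
def WordIn (n : ℕ) (w : List (ℕ × Bool)) : Prop := ∀ l ∈ w, 1 ≤ l.1 ∧ l.1 + 1 ≤ n

/-- The natural inclusion `𝒜ₙ → 𝒜ₙ₊₁`. -/
noncomputable def incl (n : ℕ) : FA n →ₐ[ℤ] FA (n+1) :=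
  FreeAlgebra.lift ℤ fun g : Idx n => gen (n+1) g.val.1 g.val.2

/-- `M` (a matrix recorded as a function `ℕ → ℕ → 𝒜ₙ`, supported on `[1,n] × [1,n]`)
is the matrix `Φ^L_β`:  `φ*_β(a_{i,n+1}) = ∑_j M_{ij} a_{j,n+1}`. -/
def IsPhiL (n : ℕ) (w : List (ℕ × Bool)) (M : ℕ → ℕ → FA n) : Prop :=
  (∀ i j, i ∉ Finset.Icc 1 n ∨ j ∉ Finset.Icc 1 n → M i j = 0) ∧
  ∀ i ∈ Finset.Icc 1 n,
    phiWord (n+1) w (gen (n+1) i (n+1)) =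
      ∑ j ∈ Finset.Icc 1 n, incl n (M i j) * gen (n+1) j (n+1)

/-- `M` is the matrix `Φ^R_β`:  `φ*_β(a_{n+1,i}) = ∑_j a_{n+1,j} M_{ji}`. -/
def IsPhiR (n : ℕ) (w : List (ℕ × Bool)) (M : ℕ → ℕ → FA n) : Prop :=
  (∀ i j, i ∉ Finset.Icc 1 n ∨ j ∉ Finset.Icc 1 n → M i j = 0) ∧
  ∀ i ∈ Finset.Icc 1 n,
    phiWord (n+1) w (gen (n+1) (n+1) i) =
      ∑ j ∈ Finset.Icc 1 n, gen (n+1) (n+1) j * incl n (M j i)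

/-- The permutation (of `ℕ`, via 1-based strand labels) determined by a braid word,
with `perm (w₁ ++ w₂) = perm w₁ * perm w₂`. -/
def permWord (w : List (ℕ × Bool)) : Equiv.Perm ℕ :=
  w.foldr (fun l f => Equiv.swap l.1 (l.1 + 1) * f) 1

/-- The writhe (exponent sum) of a braid word. -/
def writhe (w : List (ℕ × Bool)) : ℤ :=
  (w.map fun l => if l.2 then (1 : ℤ) else -1).sum

/-- Conjugation, as an algebra map to the opposite algebra. -/
noncomputable def conjHom (n : ℕ) : FA n →ₐ[ℤ] (FA n)ᵐᵒᵖ :=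
  FreeAlgebra.lift ℤ fun g : Idx n => MulOpposite.op (gen n g.val.2 g.val.1)

/-- Conjugation `x ↦ x̄`: the `ℤ`-linear anti-automorphism with `a_{ij} ↦ a_{ji}`. -/
noncomputable def conj (n : ℕ) (x : FA n) : FA n := (conjHom n x).unop

/-- Conjugation as a `ℤ`-linear map. -/
noncomputable def conjLin (n : ℕ) : FA n →ₗ[ℤ] FA n :=
  (MulOpposite.opLinearEquiv ℤ).symm.toLinearMap ∘ₗ (conjHom n).toLinearMap

/-- The word `τ_{a,p} = σ_a σ_{a+1} ⋯ σ_{a+p−1}`. -/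
def tauWord (a p : ℕ) : List (ℕ × Bool) := (List.range p).map fun t => (a + t, true)

/-- The word `κ_{a,l} = τ_{a+l−1,p} τ_{a+l−2,p} ⋯ τ_{a,p}`. -/
def kappaWord (a l p : ℕ) : List (ℕ × Bool) :=
  (((List.range l).reverse).map fun t => tauWord (a + t) p).flatten

/-- The inverse of a braid word. -/
def invWord (w : List (ℕ × Bool)) : List (ℕ × Bool) := w.reverse.map fun l => (l.1, !l.2)

/-- The `p`-cable `α^{(p)}` of a braid word `α` (each strand replaced by `p` parallel strands):
substitute `σ_m ↦ κ_{(m−1)p+1,p}` and `σ_m⁻¹ ↦ κ_{(m−1)p+1,p}⁻¹`. -/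
def cable (p : ℕ) (w : List (ℕ × Bool)) : List (ℕ × Bool) :=
  (w.map fun l =>
    if l.2 then kappaWord ((l.1 - 1) * p + 1) p p
    else invWord (kappaWord ((l.1 - 1) * p + 1) p p)).flatten

/-- The product `a_{x₁x₂} a_{x₂x₃} ⋯ a_{x_{m-1}x_m}` along a list `[x₁, …, x_m]`
(`1` for lists of length `≤ 1`). -/
noncomputable def pathFactors (n : ℕ) : List ℕ → FA n
  | x :: y :: rest => gen n x y * pathFactors n (y :: rest)
  | _ => 1

/-- `A(i,j,X) = Σ_{Y ⊆ X} (−1)^{|Y|} a_{i y₁} a_{y₁ y₂} ⋯ a_{y_k j}` (ascending order on `Y`). -/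
noncomputable def Aexp (n i j : ℕ) (X : Finset ℕ) : FA n :=
  ∑ Y ∈ X.powerset, ((-1 : ℤ) ^ Y.card) • pathFactors n (i :: (Y.sort (· ≤ ·) ++ [j]))

/-- `A'(i,j,X) = Σ_{Y ⊆ X} (−1)^{|Y|} a_{i y_k} a_{y_k y_{k−1}} ⋯ a_{y₁ j}` (descending order). -/
noncomputable def A'exp (n i j : ℕ) (X : Finset ℕ) : FA n :=
  ∑ Y ∈ X.powerset, ((-1 : ℤ) ^ Y.card) • pathFactors n (i :: ((Y.sort (· ≤ ·)).reverse ++ [j]))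

/-- `B'(i,j,X) = Σ_{Y ⊆ X, min Y ≠ j} c_Y a_{i y_k} ⋯ a_{y₁ j}`, where `c_Y = (−1)^{|Y|+1}` if all
elements of `Y` exceed `j` (including `Y = ∅`), and `c_Y = (−1)^{|Y|}` otherwise. -/
noncomputable def B'exp (n i j : ℕ) (X : Finset ℕ) : FA n :=
  ∑ Y ∈ X.powerset.filter (fun Y => Y.min ≠ (j : WithTop ℕ)),
    (if ∀ y ∈ Y, j < y then ((-1 : ℤ) ^ (Y.card + 1)) else ((-1 : ℤ) ^ Y.card)) •
      pathFactors n (i :: ((Y.sort (· ≤ ·)).reverse ++ [j]))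

/-- For `i = (q_i − 1)p + r_i` with `1 ≤ r_i ≤ p`: the quotient `q_i`. -/
def qIdx (p i : ℕ) : ℕ := (i - 1) / p + 1

/-- For `i = (q_i − 1)p + r_i` with `1 ≤ r_i ≤ p`: the remainder `r_i`. -/
def rIdx (p i : ℕ) : ℕ := (i - 1) % p + 1

attribute [local instance 2000] Algebra.toModule

/-- The homomorphism `ψ : 𝒜_{kp} → 𝒜_k ⊗ 𝒜_p`. -/
noncomputable def psi (k p : ℕ) : FA (k * p) →ₐ[ℤ] FA k ⊗[ℤ] FA p :=
  FreeAlgebra.lift ℤ fun g : Idx (k * p) =>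
    if qIdx p g.val.1 = qIdx p g.val.2 then
      (1 : FA k) ⊗ₜ[ℤ] gen p (rIdx p g.val.1) (rIdx p g.val.2)
    else if rIdx p g.val.1 = rIdx p g.val.2 then
      gen k (qIdx p g.val.1) (qIdx p g.val.2) ⊗ₜ[ℤ] (1 : FA p)
    else if (qIdx p g.val.1 < qIdx p g.val.2 ∧ rIdx p g.val.2 < rIdx p g.val.1) ∨
            (qIdx p g.val.2 < qIdx p g.val.1 ∧ rIdx p g.val.1 < rIdx p g.val.2) then 0
    else gen k (qIdx p g.val.1) (qIdx p g.val.2) ⊗ₜ[ℤ] gen p (rIdx p g.val.1) (rIdx p g.val.2)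

/-- `ψ*(x · a_{i,*}) = ψ(x) · (a_{q_i,*} ⊗ a_{r_i,*})`, the image of the element `x · a_{i,*}`
of `𝒜_{kp}^L` under `ψ* : 𝒜_{kp}^L → 𝒜_k^L ⊗ 𝒜_p^L`, the target realized inside
`𝒜_{k+1} ⊗ 𝒜_{p+1}`. -/
noncomputable def psiStarElt (k p : ℕ) (x : FA (k * p)) (i : ℕ) :
    FA (k+1) ⊗[ℤ] FA (p+1) :=
  (Algebra.TensorProduct.map (incl k) (incl p)) (psi k p x) *
    (gen (k+1) (qIdx p i) (k+1) ⊗ₜ[ℤ] gen (p+1) (rIdx p i) (p+1))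

/-- The `(i,j)` entry of `Δ(β) = diag[(−1)^{w(β)}, 1, …, 1]` (1-based indices). -/
noncomputable def deltaEnt (w : List (ℕ × Bool)) (i j : ℕ) : ℂ :=
  if i = j then (if i = 1 then (-1 : ℂ) ^ writhe w else 1) else 0

/-!
The cable of `σ_m` is `κ = τ_{a+p-1,p} ⋯ τ_{a,p}` with `a = (m-1)p+1`, a grid of `p²` crossings
exchanging the blocks `[a, a+p)` and `[a+p, a+2p)` of `p` strands. A single row `τ_{b,p}` shifts
every generator with both indices in `[b, b+p)` up by one (the correction terms created by
`σ_b` cancel those of the remaining crossings), sends the index `b+p` down to `b`, and fixes all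
other indices. Row by row, `κ` therefore moves generators of the lower block to the upper block
and back, and fixes the generators of every other block; `φ_{κ⁻¹}` does the inverse because
`φ_{σ⁻¹}` inverts `φ_σ`. Induction along `α` then follows block `1` to block `perm(α)(1)`.
-/

section Letters

variable {n : ℕ}

theorem gen_eq_ι {i j : ℕ} (h : i ≠ j ∧ 1 ≤ i ∧ i ≤ n ∧ 1 ≤ j ∧ j ≤ n) :
    gen n i j = FreeAlgebra.ι ℤ (⟨(i, j), h⟩ : Idx n) := dif_pos h

theorem phiLetter_true_gen (t : ℕ) {x y : ℕ}
    (h : x ≠ y ∧ 1 ≤ x ∧ x ≤ n ∧ 1 ≤ y ∧ y ≤ n) :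
    phiLetter n (t, true) (gen n x y) = phiGenImg n t x y := by
  simp [gen_eq_ι h, phiLetter]

theorem phiLetter_false_gen (t : ℕ) {x y : ℕ}
    (h : x ≠ y ∧ 1 ≤ x ∧ x ≤ n ∧ 1 ≤ y ∧ y ≤ n) :
    phiLetter n (t, false) (gen n x y) = phiInvGenImg n t x y := by
  simp [gen_eq_ι h, phiLetter]

theorem phiLetter_not_phiLetter_apply {a : ℕ} (ha : 1 ≤ a) (han : a + 1 ≤ n) (b : Bool)
    (x : FA n) : phiLetter n (a, !b) (phiLetter n (a, b) x) = x := by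
  suffices h : (phiLetter n (a, !b)).comp (phiLetter n (a, b)) = AlgHom.id ℤ (FA n) from
    DFunLike.congr_fun h x
  refine FreeAlgebra.hom_ext (funext fun ⟨⟨i, j⟩, hg⟩ => ?_)
  simp only [Function.comp_apply, AlgHom.coe_comp, AlgHom.coe_id, id_eq, ← gen_eq_ι hg]
  simp only at hg
  cases b <;>
  · simp only [phiLetter_true_gen _ hg, phiLetter_false_gen _ hg, Bool.not_false, Bool.not_true,
      phiGenImg, phiInvGenImg]
    split_ifs <;> subst_vars <;>
      simp (disch := omega) only [map_sub, map_mul, map_neg, neg_neg, phiLetter_true_gen,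
        phiLetter_false_gen, phiGenImg, phiInvGenImg, if_pos, if_neg, ↓reduceIte] <;>
      noncomm_ring

end Letters

section Words

variable {n : ℕ}

theorem phiWord_cons (l : ℕ × Bool) (w : List (ℕ × Bool)) (x : FA n) :
    phiWord n (l :: w) x = phiLetter n l (phiWord n w x) := rfl

theorem phiWord_singleton (l : ℕ × Bool) (x : FA n) : phiWord n [l] x = phiLetter n l x := rfl

theorem phiWord_append (w₁ w₂ : List (ℕ × Bool)) (x : FA n) :
    phiWord n (w₁ ++ w₂) x = phiWord n w₁ (phiWord n w₂ x) := by
  induction w₁ with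
  | nil => rfl
  | cons l w ih => rw [List.cons_append, phiWord_cons, phiWord_cons, ih]

theorem phiWord_invWord_apply {w : List (ℕ × Bool)} (hw : WordIn n w) (x : FA n) :
    phiWord n (invWord w) (phiWord n w x) = x := by
  induction w generalizing x with
  | nil => rfl
  | cons l w ih =>
    obtain ⟨t, b⟩ := l
    have hinv : invWord ((t, b) :: w) = invWord w ++ [(t, !b)] := by simp [invWord]
    obtain ⟨ht, htn⟩ : 1 ≤ t ∧ t + 1 ≤ n := hw (t, b) List.mem_cons_self
    rw [hinv, phiWord_append, phiWord_singleton, phiWord_cons,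
      phiLetter_not_phiLetter_apply ht htn]
    exact ih (fun l hl => hw l (List.mem_cons_of_mem _ hl)) x

theorem phiWord_gen_of_forall_ne {w : List (ℕ × Bool)} {x y : ℕ}
    (hv : x ≠ y ∧ 1 ≤ x ∧ x ≤ n ∧ 1 ≤ y ∧ y ≤ n)
    (hw : ∀ l ∈ w, x ≠ l.1 ∧ x ≠ l.1 + 1 ∧ y ≠ l.1 ∧ y ≠ l.1 + 1) :
    phiWord n w (gen n x y) = gen n x y := by
  induction w with
  | nil => rfl
  | cons l w ih =>
    obtain ⟨t, b⟩ := l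
    have h := hw (t, b) List.mem_cons_self
    rw [phiWord_cons, ih fun l hl => hw l (List.mem_cons_of_mem _ hl)]
    cases b <;> simp (disch := omega) only [phiLetter_true_gen, phiLetter_false_gen, phiGenImg,
      phiInvGenImg, if_neg]

end Words

section Tau

variable {n : ℕ}

theorem tauWord_succ (b p : ℕ) : tauWord b (p + 1) = (b, true) :: tauWord (b + 1) p := by
  simp [tauWord, List.range_succ_eq_map, Nat.add_comm, Nat.add_left_comm]

theorem le_of_mem_tauWord {b p : ℕ} {l : ℕ × Bool} (h : l ∈ tauWord b p) :
    b ≤ l.1 ∧ l.1 < b + p := by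
  simp only [tauWord, List.mem_map, List.mem_range] at h
  obtain ⟨t, ht, rfl⟩ := h
  omega

theorem phiWord_tauWord_gen_of_lt {t d x y : ℕ} (hx : 1 ≤ x) (hxt : x < t) (hty : t ≤ y)
    (hyd : y < t + d) (hyn : y + 1 ≤ n) :
    phiWord n (tauWord t d) (gen n x y) = gen n x (y + 1) - gen n x t * gen n t (y + 1) := by
  induction d generalizing t with
  | zero => omega
  | succ d ih =>
    rw [tauWord_succ, phiWord_cons]
    rcases hty.eq_or_lt with rfl | hty
    · rw [phiWord_gen_of_forall_ne (by omega) fun l hl => by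
        have := le_of_mem_tauWord hl; omega]
      simp (disch := omega) only [phiLetter_true_gen, phiGenImg, if_neg, ↓reduceIte]
    · rw [ih (by omega) hty (by omega)]
      simp (disch := omega) only [map_sub, map_mul, phiLetter_true_gen, phiGenImg, if_pos, if_neg,
        ↓reduceIte]

theorem phiWord_tauWord_gen_of_gt {t d x y : ℕ} (hy : 1 ≤ y) (hyt : y < t) (htx : t ≤ x)
    (hxd : x < t + d) (hxn : x + 1 ≤ n) :
    phiWord n (tauWord t d) (gen n x y) = gen n (x + 1) y - gen n (x + 1) t * gen n t y := by
  induction d generalizing t with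
  | zero => omega
  | succ d ih =>
    rw [tauWord_succ, phiWord_cons]
    rcases htx.eq_or_lt with rfl | htx
    · rw [phiWord_gen_of_forall_ne (by omega) fun l hl => by
        have := le_of_mem_tauWord hl; omega]
      simp (disch := omega) only [phiLetter_true_gen, phiGenImg, if_neg, ↓reduceIte]
    · rw [ih (by omega) htx (by omega)]
      simp (disch := omega) only [map_sub, map_mul, phiLetter_true_gen, phiGenImg, if_pos, if_neg,
        ↓reduceIte]

theorem phiWord_tauWord_gen_of_mem_Ico {b p x y : ℕ} (hb : 1 ≤ b) (hn : b + p ≤ n)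
    (hx : x ∈ Finset.Ico b (b + p)) (hy : y ∈ Finset.Ico b (b + p)) (hxy : x ≠ y) :
    phiWord n (tauWord b p) (gen n x y) = gen n (x + 1) (y + 1) := by
  simp only [Finset.mem_Ico] at hx hy
  induction p generalizing b with
  | zero => omega
  | succ p ih =>
    rw [tauWord_succ, phiWord_cons]
    by_cases hxb : x = b
    · subst hxb
      rw [phiWord_tauWord_gen_of_lt (by omega) (by omega) (by omega) (by omega) (by omega)]
      simp (disch := omega) only [map_sub, map_mul, phiLetter_true_gen, phiGenImg, if_pos, if_neg,
        ↓reduceIte]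
      noncomm_ring
    by_cases hyb : y = b
    · subst hyb
      rw [phiWord_tauWord_gen_of_gt (by omega) (by omega) (by omega) (by omega) (by omega)]
      simp (disch := omega) only [map_sub, map_mul, phiLetter_true_gen, phiGenImg, if_pos, if_neg,
        ↓reduceIte]
      noncomm_ring
    rw [ih (by omega) (by omega) (by omega) (by omega)]
    simp (disch := omega) only [phiLetter_true_gen, phiGenImg, if_neg]

theorem phiWord_tauWord_gen_of_notMem_Ico {b p x y : ℕ} (hb : 1 ≤ b) (hn : b + p ≤ n)
    (hv : x ≠ y ∧ 1 ≤ x ∧ x ≤ n ∧ 1 ≤ y ∧ y ≤ n)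
    (hx : x ∉ Finset.Ico b (b + p)) (hy : y ∉ Finset.Ico b (b + p)) :
    phiWord n (tauWord b p) (gen n x y) =
      gen n (if x = b + p then b else x) (if y = b + p then b else y) := by
  simp only [Finset.mem_Ico, not_and_or, not_le, not_lt] at hx hy
  induction p generalizing b with
  | zero => split_ifs <;> subst_vars <;> rfl
  | succ p ih =>
    rw [tauWord_succ, phiWord_cons, ih (by omega) (by omega) (by omega) (by omega)]
    split_ifs <;> simp (disch := omega) only [phiLetter_true_gen, phiGenImg, if_pos, if_neg,
      ↓reduceIte] <;> omega

end Tau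

section Kappa

variable {n : ℕ}

theorem kappaWord_succ (a j p : ℕ) :
    kappaWord a (j + 1) p = tauWord (a + j) p ++ kappaWord a j p := by
  simp [kappaWord, List.range_succ]

theorem le_of_mem_kappaWord {a j p : ℕ} {l : ℕ × Bool} (h : l ∈ kappaWord a j p) :
    a ≤ l.1 ∧ l.1 + 1 < a + j + p := by
  simp only [kappaWord, List.mem_flatten, List.mem_map, List.mem_reverse, List.mem_range] at h
  obtain ⟨_, ⟨t, ht, rfl⟩, hl⟩ := h
  have := le_of_mem_tauWord hl
  omega

theorem wordIn_kappaWord {a p : ℕ} (ha : 1 ≤ a) (hn : a + 2 * p ≤ n + 1) :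
    WordIn n (kappaWord a p p) := fun _ hl => by
  have := le_of_mem_kappaWord hl
  omega

theorem phiWord_kappaWord_gen_of_mem_lower {a p x y : ℕ} (ha : 1 ≤ a) (hn : a + 2 * p ≤ n + 1)
    (hx : x ∈ Finset.Ico a (a + p)) (hy : y ∈ Finset.Ico a (a + p)) (hxy : x ≠ y) :
    phiWord n (kappaWord a p p) (gen n x y) = gen n (x + p) (y + p) := by
  simp only [Finset.mem_Ico] at hx hy
  suffices h : ∀ j ≤ p, phiWord n (kappaWord a j p) (gen n x y) = gen n (x + j) (y + j) from
    h p le_rfl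
  intro j hj
  induction j with
  | zero => rfl
  | succ j ih =>
    rw [kappaWord_succ, phiWord_append, ih (by omega), phiWord_tauWord_gen_of_mem_Ico (by omega)
      (by omega) (by simp only [Finset.mem_Ico]; omega) (by simp only [Finset.mem_Ico]; omega)
      (by omega)]
    rfl

theorem phiWord_kappaWord_gen_of_mem_upper {a p x y : ℕ} (ha : 1 ≤ a) (hn : a + 2 * p ≤ n + 1)
    (hx : x ∈ Finset.Ico (a + p) (a + 2 * p)) (hy : y ∈ Finset.Ico (a + p) (a + 2 * p))
    (hxy : x ≠ y) :
    phiWord n (kappaWord a p p) (gen n x y) = gen n (x - p) (y - p) := by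
  simp only [Finset.mem_Ico] at hx hy
  -- after `j` rows of crossings, exactly the indices below `a + p + j` have moved down by `p`
  suffices h : ∀ j ≤ p, phiWord n (kappaWord a j p) (gen n x y) =
      gen n (if x < a + p + j then x - p else x) (if y < a + p + j then y - p else y) by
    simpa [show x < a + p + p by omega, show y < a + p + p by omega] using h p le_rfl
  intro j hj
  induction j with
  | zero => simp only [Nat.add_zero, if_neg (show ¬x < a + p by omega),
      if_neg (show ¬y < a + p by omega)]; rfl
  | succ j ih =>
    rw [kappaWord_succ, phiWord_append, ih (by omega), phiWord_tauWord_gen_of_notMem_Ico (by omega)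
      (by omega) (by split_ifs <;> omega) (by simp only [Finset.mem_Ico]; split_ifs <;> omega)
      (by simp only [Finset.mem_Ico]; split_ifs <;> omega)]
    congr 1 <;> split_ifs <;> omega

theorem phiWord_kappaWord_gen_of_notMem {a p x y : ℕ}
    (hv : x ≠ y ∧ 1 ≤ x ∧ x ≤ n ∧ 1 ≤ y ∧ y ≤ n)
    (hx : x ∉ Finset.Ico a (a + 2 * p)) (hy : y ∉ Finset.Ico a (a + 2 * p)) :
    phiWord n (kappaWord a p p) (gen n x y) = gen n x y := by
  simp only [Finset.mem_Ico, not_and_or, not_le, not_lt] at hx hy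
  exact phiWord_gen_of_forall_ne hv fun _ hl => by
    have := le_of_mem_kappaWord hl
    omega

end Kappa

section Blocks

variable {n p i j : ℕ}

theorem phiWord_kappaWord_block {c m : ℕ} (hc : (c + 2) * p ≤ n) (hm : (m + 1) * p ≤ n)
    (hi : 1 ≤ i) (hip : i ≤ p) (hj : 1 ≤ j) (hjp : j ≤ p) (hij : i ≠ j) :
    phiWord n (kappaWord (c * p + 1) p p) (gen n (i + m * p) (j + m * p)) =
      gen n (i + Equiv.swap c (c + 1) m * p) (j + Equiv.swap c (c + 1) m * p) := by
  have hcp : (c + 2) * p = c * p + 2 * p := by ring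
  have hmp : (m + 1) * p = m * p + p := by ring
  rcases lt_or_ge m c with hmc | hcm
  · have : (m + 1) * p ≤ c * p := Nat.mul_le_mul_right p hmc
    rw [Equiv.swap_apply_of_ne_of_ne (by omega) (by omega),
      phiWord_kappaWord_gen_of_notMem (by omega) (by simp only [Finset.mem_Ico]; omega)
        (by simp only [Finset.mem_Ico]; omega)]
  rcases eq_or_ne m c with rfl | hmc
  · rw [Equiv.swap_apply_left, phiWord_kappaWord_gen_of_mem_lower (by omega) (by omega)
      (by simp only [Finset.mem_Ico]; omega) (by simp only [Finset.mem_Ico]; omega) (by omega)]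
    congr 1 <;> ring
  rcases eq_or_ne m (c + 1) with rfl | hmc'
  · have : (c + 1) * p = c * p + p := by ring
    rw [Equiv.swap_apply_right, phiWord_kappaWord_gen_of_mem_upper (by omega) (by omega)
      (by simp only [Finset.mem_Ico]; omega) (by simp only [Finset.mem_Ico]; omega) (by omega)]
    congr 1 <;> omega
  have : (c + 2) * p ≤ m * p := Nat.mul_le_mul_right p (by omega)
  rw [Equiv.swap_apply_of_ne_of_ne (by omega) (by omega),
    phiWord_kappaWord_gen_of_notMem (by omega) (by simp only [Finset.mem_Ico]; omega)
      (by simp only [Finset.mem_Ico]; omega)]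

theorem phiWord_invWord_kappaWord_block {c m : ℕ} (hc : (c + 2) * p ≤ n)
    (hm : (m + 1) * p ≤ n) (hi : 1 ≤ i) (hip : i ≤ p) (hj : 1 ≤ j) (hjp : j ≤ p)
    (hij : i ≠ j) :
    phiWord n (invWord (kappaWord (c * p + 1) p p)) (gen n (i + m * p) (j + m * p)) =
      gen n (i + Equiv.swap c (c + 1) m * p) (j + Equiv.swap c (c + 1) m * p) := by
  have hm' : (Equiv.swap c (c + 1) m + 1) * p ≤ n := by
    rw [Equiv.swap_apply_def]
    split_ifs
    exacts [hc, (Nat.mul_le_mul_right p (by omega)).trans hc, hm]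
  have h := phiWord_kappaWord_block hc hm' hi hip hj hjp hij
  rw [Equiv.swap_apply_self] at h
  rw [← h, phiWord_invWord_apply (wordIn_kappaWord le_add_self (by nlinarith))]

end Blocks

section Cable

theorem permWord_cons_apply (l : ℕ × Bool) (w : List (ℕ × Bool)) (x : ℕ) :
    permWord (l :: w) x = Equiv.swap l.1 (l.1 + 1) (permWord w x) := rfl

theorem permWord_mem_Icc {k : ℕ} {w : List (ℕ × Bool)} (hw : WordIn k w) {s : ℕ}
    (hs : s ∈ Finset.Icc 1 k) : permWord w s ∈ Finset.Icc 1 k := by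
  induction w with
  | nil => exact hs
  | cons l w ih =>
    have hl := hw l List.mem_cons_self
    have h := ih fun l hl => hw l (List.mem_cons_of_mem _ hl)
    simp only [Finset.mem_Icc] at h ⊢
    rw [permWord_cons_apply, Equiv.swap_apply_def]
    split_ifs <;> omega

theorem cable_cons (p : ℕ) (l : ℕ × Bool) (w : List (ℕ × Bool)) :
    cable p (l :: w) = cable p [l] ++ cable p w := by
  simp [cable]

variable {n p i j : ℕ}

theorem phiWord_cable_singleton_block {c m : ℕ} (b : Bool) (hc : (c + 2) * p ≤ n)
    (hm : (m + 1) * p ≤ n) (hi : 1 ≤ i) (hip : i ≤ p) (hj : 1 ≤ j) (hjp : j ≤ p)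
    (hij : i ≠ j) :
    phiWord n (cable p [(c + 1, b)]) (gen n (i + m * p) (j + m * p)) =
      gen n (i + Equiv.swap c (c + 1) m * p) (j + Equiv.swap c (c + 1) m * p) := by
  cases b
  · simpa [cable] using phiWord_invWord_kappaWord_block hc hm hi hip hj hjp hij
  · simpa [cable] using phiWord_kappaWord_block hc hm hi hip hj hjp hij

theorem phiWord_cable_block {k m : ℕ} {α : List (ℕ × Bool)} (hα : WordIn k α)
    (hm : m + 1 ≤ k)
    (hi : 1 ≤ i) (hip : i ≤ p) (hj : 1 ≤ j) (hjp : j ≤ p) (hij : i ≠ j) :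
    phiWord (k * p) (cable p α) (gen (k * p) (i + m * p) (j + m * p)) =
      gen (k * p) (i + (permWord α (m + 1) - 1) * p) (j + (permWord α (m + 1) - 1) * p) := by
  induction α with
  | nil => rfl
  | cons l α ih =>
    obtain ⟨a, b⟩ := l
    obtain ⟨ha, hak⟩ : 1 ≤ a ∧ a + 1 ≤ k := hα _ List.mem_cons_self
    obtain ⟨c, rfl⟩ : ∃ c, a = c + 1 := ⟨a - 1, by omega⟩
    have hα' : WordIn k α := fun l hl => hα l (List.mem_cons_of_mem _ hl)
    obtain ⟨hs1, hsk⟩ := Finset.mem_Icc.mp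
      (permWord_mem_Icc hα' (Finset.mem_Icc.mpr ⟨le_add_self, hm⟩))
    obtain ⟨s, hs⟩ : ∃ s, permWord α (m + 1) = s + 1 :=
      ⟨_, (Nat.sub_add_cancel hs1).symm⟩
    rw [hs] at hsk
    -- strands are labelled from `1`, blocks from `0`
    rw [cable_cons, phiWord_append, ih hα', hs, Nat.add_sub_cancel,
      phiWord_cable_singleton_block b (Nat.mul_le_mul_right p hak)
        (Nat.mul_le_mul_right p hsk) hi hip hj hjp hij,
      permWord_cons_apply, hs, (add_left_injective 1).swap_apply, Nat.add_sub_cancel]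

end Cable

theorem phi_cable_on_first_block_general (k p : ℕ) (hk : 1 ≤ k)
    (α : List (ℕ × Bool)) (hα : WordIn k α)
    (i j : ℕ) (hi : 1 ≤ i) (hip : i ≤ p) (hj : 1 ≤ j) (hjp : j ≤ p) (hij : i ≠ j) :
    ∃ m : ℕ, m + 1 ≤ k ∧ m = permWord α 1 - 1 ∧
      phiWord (k * p) (cable p α) (gen (k * p) i j) =
        gen (k * p) (i + m * p) (j + m * p) := by
  have hperm := permWord_mem_Icc hα (s := 1) (by simp [hk])
  rw [Finset.mem_Icc] at hperm
  refine ⟨permWord α 1 - 1, by omega, rfl, ?_⟩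
  simpa using phiWord_cable_block hα (m := 0) hk hi hip hj hjp hij

/-- For a word `α` in the generators of `B_k` and `1 ≤ i ≠ j ≤ p`, there is
`0 ≤ m ≤ k−1` (namely `m = perm(α)(1) − 1`) with `φ_{α^{(p)}}(a_{ij}) = a_{i+mp, j+mp}`. -/
theorem phi_cable_on_first_block (k p : ℕ) (hk : 1 ≤ k) (hp : 1 ≤ p)
    (α : List (ℕ × Bool)) (hα : WordIn k α)
    (i j : ℕ) (hi : 1 ≤ i) (hip : i ≤ p) (hj : 1 ≤ j) (hjp : j ≤ p) (hij : i ≠ j) :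
    ∃ m : ℕ, m + 1 ≤ k ∧ m = permWord α 1 - 1 ∧
      phiWord (k * p) (cable p α) (gen (k * p) i j) =
        gen (k * p) (i + m * p) (j + m * p) :=
  phi_cable_on_first_block_general k p hk α hα i j hi hip hj hjp hij
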